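/- arXiv:1303.4150 — 6 statements merged into one kernel-verified Lean document; each statement's English description precedes it below -/
import Mathlib

section
/- No string over {1,2,3} of length less than 9 contains all six permutations of {1,2,3} as contiguous substrings; hence the minimal superpermutation length for n = 3 is 9. -/
set_option maxRecDepth 20000 in
lemma stmt2_key : ∀ a b c d e f g h : Fin 3,
    ¬ ([0,1,2] <:+: [a,b,c,d,e,f,g,h] ∧ [0,2,1] <:+: [a,b,c,d,e,f,g,h] ∧
       [1,0,2] <:+: [a,b,c,d,e,f,g,h] ∧ [1,2,0] <:+: [a,b,c,d,e,f,g,h] ∧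
       [2,0,1] <:+: [a,b,c,d,e,f,g,h] ∧ [2,1,0] <:+: [a,b,c,d,e,f,g,h]) := by decide

lemma stmt2_key' (l : List (Fin 3)) (hl : l.length = 8) :
    ¬ ([0,1,2] <:+: l ∧ [0,2,1] <:+: l ∧ [1,0,2] <:+: l ∧
       [1,2,0] <:+: l ∧ [2,0,1] <:+: l ∧ [2,1,0] <:+: l) := by
  match l, hl with
  | [a,b,c,d,e,f,g,h], _ => exact stmt2_key a b c d e f g h

theorem stmt2 (s : List ℕ) (hs : ∀ x ∈ s, x ∈ ({1, 2, 3} : Set ℕ))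
    (h : ∀ w : List ℕ, w.Perm [1, 2, 3] → w <:+: s) : 9 ≤ s.length := by
  by_contra hlt
  push_neg at hlt
  have hle : s.length ≤ 8 := by omega
  set f : ℕ → Fin 3 := fun n => ⟨(n - 1) % 3, Nat.mod_lt _ (by norm_num)⟩ with hf
  set t : List (Fin 3) := s.map f ++ List.replicate (8 - s.length) 0 with ht
  have htl : t.length = 8 := by
    simp [ht]; omega
  have key : ∀ w : List ℕ, w.Perm [1,2,3] → (w.map f) <:+: t := by
    intro w hw
    exact ((h w hw).map f).trans ((List.prefix_append _ _).isInfix)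
  refine stmt2_key' t htl ⟨?_, ?_, ?_, ?_, ?_, ?_⟩
  · have := key [1,2,3] (by decide); simpa [hf] using this
  · have := key [1,3,2] (by decide); simpa [hf] using this
  · have := key [2,1,3] (by decide); simpa [hf] using this
  · have := key [2,3,1] (by decide); simpa [hf] using this
  · have := key [3,1,2] (by decide); simpa [hf] using this
  · have := key [3,2,1] (by decide); simpa [hf] using this
end

section
/- Every permutation σ of {1,...,n} can be written uniquely as σ = p_2^{j_2} ∘ p_3^{j_3} ∘ ⋯ ∘ p_n^{j_n} where 0 ≤ j_i < i for each i. -/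
def pcyc (k : ℕ) : Equiv.Perm ℕ := (List.range' 1 k).formPerm

/-- The ordered composition `p_2^{e 2} ∘ p_3^{e 3} ∘ ⋯ ∘ p_n^{e n}`. -/
def circProd (n : ℕ) (e : ℕ → ℕ) : Equiv.Perm ℕ :=
  ((List.range' 2 (n - 1)).map fun i => (pcyc i) ^ (e i)).prod

/-!
The permutations of `ℕ` supported in `{1, …, n+1}` split into the cosets `S_n * p_{n+1}^j`,
`j < n+1`: the exponent `j` is read off from `σ⁻¹ (n+1)`, since
`p_{n+1}^j` is the only one of these powers mapping `n+1-j` to `n+1`. Induction on `n` peels off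
the factors `p_n^{j_n}, p_{n-1}^{j_{n-1}}, …` one at a time.
-/

open Equiv

/-- The copy of `S_n` inside `Perm ℕ`. -/
def symmIcc (n : ℕ) : Subgroup (Perm ℕ) := fixingSubgroup (Perm ℕ) (Set.Icc 1 n)ᶜ

lemma mem_symmIcc {n : ℕ} {σ : Perm ℕ} : σ ∈ symmIcc n ↔ ∀ i ∉ Set.Icc 1 n, σ i = i :=
  mem_fixingSubgroup_iff (Perm ℕ)

lemma symmIcc_mono {m n : ℕ} (h : m ≤ n) : symmIcc m ≤ symmIcc n :=
  fixingSubgroup_antitone (Perm ℕ) ℕ <| Set.compl_subset_compl.mpr <| Set.Icc_subset_Icc le_rfl h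

lemma eq_one_of_mem_symmIcc_zero {σ : Perm ℕ} (hσ : σ ∈ symmIcc 0) : σ = 1 :=
  Perm.ext fun i => mem_symmIcc.mp hσ i (by simp)

lemma mem_symmIcc_of_mem_succ {n : ℕ} {σ : Perm ℕ} (hσ : σ ∈ symmIcc (n + 1))
    (hfix : σ (n + 1) = n + 1) : σ ∈ symmIcc n := by
  refine mem_symmIcc.mpr fun i hi => ?_
  rcases eq_or_ne i (n + 1) with rfl | hne
  · exact hfix
  · exact mem_symmIcc.mp hσ i (by simp only [Set.mem_Icc] at hi ⊢; omega)

lemma pcyc_mem_symmIcc (k : ℕ) : pcyc k ∈ symmIcc k := by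
  refine mem_symmIcc.mpr fun x hx => List.formPerm_apply_of_notMem fun h => hx ?_
  rw [List.mem_range'] at h
  obtain ⟨i, hi, rfl⟩ := h
  simp only [Set.mem_Icc]
  omega

lemma pcyc_pow_apply (k m i : ℕ) (hi : i < k) :
    (pcyc k ^ m) (1 + i) = 1 + (i + m) % k := by
  have h := List.formPerm_pow_apply_getElem (List.range' 1 k) List.nodup_range' m i
    (by simpa using hi)
  simpa [pcyc, List.getElem_range'] using h

lemma pcyc_pow_apply_eq_iff {k j b : ℕ} (hj : j < k) (hb : b ∈ Set.Icc 1 k) :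
    (pcyc k ^ j) b = k ↔ j = k - b := by
  obtain ⟨hb1, hbk⟩ := hb
  obtain ⟨i, rfl⟩ : ∃ i, b = 1 + i := ⟨b - 1, by omega⟩
  rw [pcyc_pow_apply k j i (by omega)]
  rcases lt_or_ge (i + j) k with h | h
  · rw [Nat.mod_eq_of_lt h]
    omega
  · rw [Nat.mod_eq_sub_mod h, Nat.mod_eq_of_lt (by omega)]
    omega

lemma exists_eq_mul_pcyc_pow {n : ℕ} {σ : Perm ℕ} (hσ : σ ∈ symmIcc (n + 1)) :
    ∃ τ ∈ symmIcc n, ∃ j < n + 1, σ = τ * pcyc (n + 1) ^ j := by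
  set b := σ⁻¹ (n + 1)
  have hσb : σ b = n + 1 := σ.apply_symm_apply (n + 1)
  have hb : b ∈ Set.Icc 1 (n + 1) := by
    by_contra hb
    have := mem_symmIcc.mp hσ b hb
    simp only [Set.mem_Icc] at hb
    omega
  have hj : n + 1 - b < n + 1 := by
    have := hb.1
    omega
  have hp : (pcyc (n + 1) ^ (n + 1 - b)) b = n + 1 := (pcyc_pow_apply_eq_iff hj hb).mpr rfl
  refine ⟨σ * (pcyc (n + 1) ^ (n + 1 - b))⁻¹, ?_, n + 1 - b, hj, by group⟩
  refine mem_symmIcc_of_mem_succ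
    (mul_mem hσ (inv_mem (pow_mem (pcyc_mem_symmIcc _) _))) ?_
  rw [Perm.mul_apply, Perm.inv_eq_iff_eq.mpr hp.symm, hσb]

lemma eq_of_mul_pcyc_pow_eq {n : ℕ} {τ τ' : Perm ℕ} (hτ : τ ∈ symmIcc n) (hτ' : τ' ∈ symmIcc n)
    {j j' : ℕ} (hj : j < n + 1) (hj' : j' < n + 1)
    (h : τ * pcyc (n + 1) ^ j = τ' * pcyc (n + 1) ^ j') : j = j' := by
  have hfix : ∀ ρ ∈ symmIcc n, ρ (n + 1) = n + 1 := fun ρ hρ => mem_symmIcc.mp hρ _ (by simp)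
  have hc : n + 1 - j ∈ Set.Icc 1 (n + 1) := by simp only [Set.mem_Icc]; omega
  have hpj : (pcyc (n + 1) ^ j) (n + 1 - j) = n + 1 :=
    (pcyc_pow_apply_eq_iff hj hc).mpr (by omega)
  have hpj' : (pcyc (n + 1) ^ j') (n + 1 - j) = n + 1 := by
    apply τ'.injective
    rw [hfix τ' hτ', ← Perm.mul_apply, ← h, Perm.mul_apply, hpj, hfix τ hτ]
  have := (pcyc_pow_apply_eq_iff hj' hc).mp hpj'
  omega

def IsAdmissible (n : ℕ) (j : ℕ → ℕ) : Prop :=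
  (∀ i ∈ Finset.Icc 2 n, j i < i) ∧ (∀ i ∉ Finset.Icc 2 n, j i = 0)

lemma eq_zero_of_isAdmissible_zero {j : ℕ → ℕ} (hj : IsAdmissible 0 j) : j = 0 :=
  funext fun i => hj.2 i (by simp)

lemma IsAdmissible.lt_succ {n : ℕ} {j : ℕ → ℕ} (hj : IsAdmissible (n + 1) j) :
    j (n + 1) < n + 1 := by
  by_cases hn : 1 ≤ n
  · exact hj.1 _ (by simp only [Finset.mem_Icc]; omega)
  · rw [hj.2 _ (by simp only [Finset.mem_Icc]; omega)]
    omega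

lemma IsAdmissible.update_succ_zero {n : ℕ} {j : ℕ → ℕ} (hj : IsAdmissible (n + 1) j) :
    IsAdmissible n (Function.update j (n + 1) 0) := by
  refine ⟨fun i hi => ?_, fun i hi => ?_⟩ <;> simp only [Finset.mem_Icc] at hi <;>
    rcases eq_or_ne i (n + 1) with rfl | hne
  · omega
  · rw [Function.update_of_ne hne]
    exact hj.1 i (by simp only [Finset.mem_Icc]; omega)
  · simp
  · rw [Function.update_of_ne hne]
    exact hj.2 i (by simp only [Finset.mem_Icc]; omega)

lemma IsAdmissible.update_succ {n m : ℕ} {j : ℕ → ℕ} (hj : IsAdmissible n j) (hm : m < n + 1) :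
    IsAdmissible (n + 1) (Function.update j (n + 1) m) := by
  refine ⟨fun i hi => ?_, fun i hi => ?_⟩ <;> simp only [Finset.mem_Icc] at hi <;>
    rcases eq_or_ne i (n + 1) with rfl | hne
  · simp only [Function.update_self]
    omega
  · rw [Function.update_of_ne hne]
    exact hj.1 i (by simp only [Finset.mem_Icc]; omega)
  · simp only [Function.update_self]
    omega
  · rw [Function.update_of_ne hne]
    exact hj.2 i (by simp only [Finset.mem_Icc]; omega)

lemma circProd_zero (e : ℕ → ℕ) : circProd 0 e = 1 := rfl

lemma circProd_mem_symmIcc (n : ℕ) (e : ℕ → ℕ) : circProd n e ∈ symmIcc n := by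
  refine list_prod_mem fun p hp => ?_
  obtain ⟨i, hi, rfl⟩ := List.mem_map.mp hp
  rw [List.mem_range'_1] at hi
  exact pow_mem (symmIcc_mono (by omega) (pcyc_mem_symmIcc i)) _

lemma circProd_congr {n : ℕ} {e e' : ℕ → ℕ} (h : ∀ i ∈ Finset.Icc 2 n, e i = e' i) :
    circProd n e = circProd n e' := by
  refine congrArg List.prod (List.map_congr_left fun i hi => ?_)
  rw [List.mem_range'_1] at hi
  rw [h i (by simp only [Finset.mem_Icc]; omega)]

lemma circProd_update_succ (n m : ℕ) (e : ℕ → ℕ) :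
    circProd n (Function.update e (n + 1) m) = circProd n e :=
  circProd_congr fun i hi => Function.update_of_ne (by simp only [Finset.mem_Icc] at hi; omega) _ _

lemma circProd_succ (n : ℕ) (e : ℕ → ℕ) :
    circProd (n + 1) e = circProd n e * pcyc (n + 1) ^ e (n + 1) := by
  rcases Nat.eq_zero_or_pos n with rfl | hn
  · simp [circProd, pcyc]
  · obtain ⟨m, rfl⟩ : ∃ m, n = m + 1 := ⟨n - 1, by omega⟩
    simp [circProd, List.range'_concat, show 2 + m = m + 2 by omega]

theorem exists_isAdmissible_circProd_eq (n : ℕ) {σ : Perm ℕ} (hσ : σ ∈ symmIcc n) :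
    ∃ j, IsAdmissible n j ∧ σ = circProd n j := by
  induction n generalizing σ with
  | zero =>
    exact ⟨0, by simp [IsAdmissible], by rw [eq_one_of_mem_symmIcc_zero hσ, circProd_zero]⟩
  | succ n ih =>
    obtain ⟨τ, hτ, m, hm, rfl⟩ := exists_eq_mul_pcyc_pow hσ
    obtain ⟨e, he, rfl⟩ := ih hτ
    refine ⟨Function.update e (n + 1) m, he.update_succ hm, ?_⟩
    rw [circProd_succ, circProd_update_succ, Function.update_self]

theorem circProd_injOn (n : ℕ) : Set.InjOn (circProd n) {j | IsAdmissible n j} := by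
  induction n with
  | zero =>
    intro j hj j' hj' _
    rw [eq_zero_of_isAdmissible_zero hj, eq_zero_of_isAdmissible_zero hj']
  | succ n ih =>
    intro j hj j' hj' h
    rw [circProd_succ, circProd_succ] at h
    have hlast : j (n + 1) = j' (n + 1) :=
      eq_of_mul_pcyc_pow_eq (circProd_mem_symmIcc n j) (circProd_mem_symmIcc n j')
        hj.lt_succ hj'.lt_succ h
    rw [hlast, mul_left_inj, ← circProd_update_succ n 0 j, ← circProd_update_succ n 0 j'] at h
    have hrest := ih hj.update_succ_zero hj'.update_succ_zero h
    funext i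
    rcases eq_or_ne i (n + 1) with rfl | hne
    · exact hlast
    · simpa [Function.update_of_ne hne] using congrFun hrest i

theorem stmt4_general (n : ℕ) (σ : Equiv.Perm ℕ)
    (hσ : ∀ i, i ∉ Set.Icc 1 n → σ i = i) :
    ∃! j : ℕ → ℕ, (∀ i ∈ Finset.Icc 2 n, j i < i) ∧ (∀ i ∉ Finset.Icc 2 n, j i = 0) ∧
      σ = circProd n j := by
  simp only [← and_assoc]
  obtain ⟨j, hj, rfl⟩ := exists_isAdmissible_circProd_eq n (mem_symmIcc.mpr hσ)
  exact ⟨j, ⟨hj, rfl⟩, fun j' ⟨hj', h⟩ => circProd_injOn n hj' hj h.symm⟩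

theorem stmt4 (n : ℕ) (hn : 1 ≤ n) (σ : Equiv.Perm ℕ)
    (hσ : ∀ i, i ∉ Set.Icc 1 n → σ i = i) :
    ∃! j : ℕ → ℕ, (∀ i ∈ Finset.Icc 2 n, j i < i) ∧ (∀ i ∉ Finset.Icc 2 n, j i = 0) ∧
      σ = circProd n j :=
  stmt4_general n σ hσ
end

section
/- For every n ≥ 1, the string M_n defined by the recursive construction contains every permutation of {1,...,n} as a contiguous substring. -/
/-- All length-`n` windows of `s`. -/
def windows (n : ℕ) (s : List ℕ) : List (List ℕ) :=
  (List.range (s.length + 1 - n)).map fun i => (s.drop i).take n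

/-- The permutations of `{1,…,n}` in order of first appearance as substrings of `s`. -/
def permsOrder (n : ℕ) (s : List ℕ) : List (List ℕ) :=
  (((windows n s).filter fun w => decide (w.Perm (List.range' 1 n))).reverse.dedup).reverse

/-- Length of the maximal overlap: the longest suffix of `s` that is a prefix of `t`. -/
def ov (s t : List ℕ) : ℕ :=
  ((List.range (min s.length t.length + 1)).filter fun l => (t.take l).isSuffixOf s).foldr max 0

/-- Concatenate with maximal overlap. -/
def mergeOv (s t : List ℕ) : List ℕ := s ++ t.drop (ov s t)

/-- The recursively constructed superpermutation `M_n`. -/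
def Mrec : ℕ → List ℕ
  | 0 => []
  | 1 => [1]
  | n + 2 =>
      ((permsOrder (n + 1) (Mrec (n + 1))).map fun P => P ++ [n + 2] ++ P).foldl mergeOv []

/-!
A permutation of `{1,…,n+1}` has the form `A ++ (n+1) :: B`, and `B ++ A` is a permutation of
`{1,…,n}`. By induction `B ++ A` occurs in `M_n`, so it is one of the `P_j`, and
`Q_j = B ++ A ++ [n+1] ++ B ++ A` contains `A ++ (n+1) :: B`. Gluing with overlap never
destroys a block: each `Q_j` is a suffix of the word built up to it, which in turn is a prefix
of `M_{n+1}`.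
-/

theorem List.foldr_max_mem_cons {α : Type*} [LinearOrder α] (b : α) (L : List α) :
    L.foldr max b ∈ b :: L := by
  induction L with
  | nil => simp
  | cons a L ih =>
    rcases max_choice a (L.foldr max b) with h | h <;> rw [List.foldr_cons, h]
    · simp
    · rcases List.mem_cons.1 ih with h' | h' <;> simp [h']

theorem take_ov_suffix (s t : List ℕ) : t.take (ov s t) <:+ s := by
  unfold ov
  rcases List.mem_cons.1 (List.foldr_max_mem_cons 0 _) with h | h
  · rw [h]
    exact List.nil_suffix
  · simpa [List.isSuffixOf_iff_suffix] using (List.mem_filter.1 h).2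

theorem prefix_mergeOv (s t : List ℕ) : s <+: mergeOv s t :=
  List.prefix_append _ _

theorem suffix_mergeOv (s t : List ℕ) : t <:+ mergeOv s t := by
  obtain ⟨u, hu⟩ := take_ov_suffix s t
  refine ⟨u, ?_⟩
  rw [mergeOv]
  nth_rewrite 1 [← hu]
  rw [List.append_assoc, List.take_append_drop]

theorem prefix_foldl_mergeOv (L : List (List ℕ)) (init : List ℕ) :
    init <+: L.foldl mergeOv init := by
  induction L generalizing init with
  | nil => exact List.prefix_refl _
  | cons a L ih => exact (prefix_mergeOv init a).trans (ih _)

theorem infix_foldl_mergeOv_of_mem {q : List ℕ} {L : List (List ℕ)} (init : List ℕ)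
    (h : q ∈ L) : q <:+: L.foldl mergeOv init := by
  obtain ⟨L₁, L₂, rfl⟩ := List.append_of_mem h
  rw [List.foldl_append, List.foldl_cons]
  exact (suffix_mergeOv _ q).isInfix.trans (prefix_foldl_mergeOv L₂ _).isInfix

theorem mem_windows_of_infix {w s : List ℕ} (h : w <:+: s) : w ∈ windows w.length s := by
  obtain ⟨a, b, rfl⟩ := h
  refine List.mem_map.2 ⟨a.length, List.mem_range.2 ?_, ?_⟩
  · simp only [List.length_append]
    omega
  · rw [List.append_assoc, List.drop_left, List.take_left]

theorem mem_permsOrder_of_infix {w s : List ℕ} {n : ℕ} (hw : w.Perm (List.range' 1 n))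
    (h : w <:+: s) : w ∈ permsOrder n s := by
  have hlen : w.length = n := by simpa using hw.length_eq
  simp only [permsOrder, List.mem_reverse, List.mem_dedup, List.mem_filter, decide_eq_true_eq]
  exact ⟨hlen ▸ mem_windows_of_infix h, hw⟩

theorem List.Perm.rotate_of_middle {α : Type*} {A B l : List α} {a : α}
    (h : (A ++ a :: B).Perm (l ++ [a])) : (B ++ A).Perm l :=
  List.perm_append_comm.trans
    (List.perm_middle.symm.trans (h.trans (List.perm_append_singleton a l))).cons_inv

theorem infix_Mrec_succ_succ {n : ℕ} {P : List ℕ} (hP : P ∈ permsOrder (n + 1) (Mrec (n + 1))) :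
    P ++ [n + 2] ++ P <:+: Mrec (n + 2) :=
  infix_foldl_mergeOv_of_mem _ (List.mem_map_of_mem hP)

theorem stmt6 (n : ℕ) (w : List ℕ) (hw : w.Perm (List.range' 1 n)) :
    w <:+: Mrec n := by
  match n, w, hw with
  | 0, w, hw =>
    rw [List.perm_nil.1 hw]
    exact List.nil_infix
  | 1, w, hw =>
    rw [List.perm_singleton.1 hw]
    exact List.infix_refl _
  | n + 2, w, hw =>
    obtain ⟨A, B, rfl⟩ := List.append_of_mem (a := n + 2) (hw.mem_iff.2 (by simp))
    have hBA : (B ++ A).Perm (List.range' 1 (n + 1)) :=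
      List.Perm.rotate_of_middle (by rwa [List.range'_1_concat, Nat.add_comm 1] at hw)
    have hQ := infix_Mrec_succ_succ (mem_permsOrder_of_infix hBA (stmt6 (n + 1) _ hBA))
    exact List.IsInfix.trans ⟨B, A, by simp⟩ hQ
end

section
/- For every n ≥ 1, the string M_n produced by the recursive construction has length exactly ∑_{k=1}^n k!. -/
open List

namespace Superperm

section Overlap

lemma ov_le_and_take_ov_suffix (s t : List ℕ) :
    ov s t ≤ min s.length t.length ∧ t.take (ov s t) <:+ s := by
  have hmem : ov s t ∈ (range (min s.length t.length + 1)).filter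
      fun l => (t.take l).isSuffixOf s := by
    have hne : (range (min s.length t.length + 1)).filter
        (fun l => (t.take l).isSuffixOf s) ≠ [] :=
      ne_nil_of_mem (mem_filter.2 ⟨mem_range.2 (Nat.succ_pos _), by simp⟩)
    exact maximum_mem (foldr_max_of_ne_nil hne).symm
  simp only [mem_filter, mem_range, isSuffixOf_iff_suffix] at hmem
  exact ⟨Nat.lt_succ_iff.1 hmem.1, hmem.2⟩

lemma ov_le_length_left (s t : List ℕ) : ov s t ≤ s.length :=
  (ov_le_and_take_ov_suffix s t).1.trans (min_le_left _ _)

lemma ov_le_length_right (s t : List ℕ) : ov s t ≤ t.length :=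
  (ov_le_and_take_ov_suffix s t).1.trans (min_le_right _ _)

lemma take_ov_suffix (s t : List ℕ) : t.take (ov s t) <:+ s :=
  (ov_le_and_take_ov_suffix s t).2

lemma le_ov {s t : List ℕ} {l : ℕ} (hs : l ≤ s.length) (ht : l ≤ t.length)
    (h : t.take l <:+ s) : l ≤ ov s t :=
  le_max_of_le' 0 (mem_filter.2 ⟨mem_range.2 (by omega), by simpa using h⟩) le_rfl

lemma drop_length_sub_ov (s t : List ℕ) : s.drop (s.length - ov s t) = t.take (ov s t) := by
  have h := take_ov_suffix s t
  rw [suffix_iff_eq_drop, length_take, min_eq_left (ov_le_length_right s t)] at h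
  exact h.symm

lemma ov_lt_of_ne {s t : List ℕ} (hl : s.length = t.length) (hne : s ≠ t) :
    ov s t < t.length := by
  refine lt_of_le_of_ne (ov_le_length_right s t) fun h => hne ?_
  have hsuf := take_ov_suffix s t
  rw [h, take_length] at hsuf
  exact (hsuf.eq_of_length hl.symm).symm

lemma ov_append_left {s t : List ℕ} (z : List ℕ) (h : t.length ≤ s.length) :
    ov (z ++ s) t = ov s t := by
  apply le_antisymm
  · have hl : ov (z ++ s) t ≤ s.length := (ov_le_length_right _ t).trans h
    refine le_ov hl (ov_le_length_right _ t) ?_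
    exact suffix_of_suffix_length_le (take_ov_suffix _ t) (suffix_append z s)
      ((length_take_le _ _).trans hl)
  · exact le_ov (by rw [length_append]; have := ov_le_length_left s t; omega)
      (ov_le_length_right s t)
      ((take_ov_suffix s t).trans (suffix_append z s))

lemma ov_append_append {z w P P' : List ℕ} (hl : P'.length ≤ P.length)
    (hlong : ∀ l, P'.length < l → l ≤ (z ++ P).length → l ≤ (P' ++ w).length →
      ¬ (P' ++ w).take l <:+ z ++ P) :
    ov (z ++ P) (P' ++ w) = ov P P' := by
  apply le_antisymm
  · by_contra hlt
    have hsuf := take_ov_suffix (z ++ P) (P' ++ w)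
    by_cases hshort : ov (z ++ P) (P' ++ w) ≤ P'.length
    · rw [take_append_of_le_length hshort] at hsuf
      refine hlt (le_ov (hshort.trans hl) hshort ?_)
      exact suffix_of_suffix_length_le hsuf (suffix_append z P)
        ((length_take_le _ _).trans (hshort.trans hl))
    · exact hlong _ (by omega) (ov_le_length_left _ _) (ov_le_length_right _ _) hsuf
  · have ho := ov_le_length_right P P'
    refine le_ov (by rw [length_append]; have := ov_le_length_left P P'; omega)
      (by rw [length_append]; omega) ?_
    rw [take_append_of_le_length ho]
    exact (take_ov_suffix P P').trans (suffix_append z P)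

lemma mergeOv_eq_take_append (s t : List ℕ) :
    mergeOv s t = s.take (s.length - ov s t) ++ t := by
  rw [mergeOv]
  nth_rewrite 1 [← take_append_drop (s.length - ov s t) s]
  rw [drop_length_sub_ov, append_assoc, take_append_drop]

lemma mergeOv_nil_left (t : List ℕ) : mergeOv [] t = t := by
  simp [mergeOv_eq_take_append]

end Overlap

section Merge

lemma prefix_foldl_mergeOv (L : List (List ℕ)) (s : List ℕ) : s <+: L.foldl mergeOv s := by
  induction L generalizing s with
  | nil => exact prefix_refl s
  | cons t L ih => exact (prefix_append s _).trans (ih (mergeOv s t))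

lemma foldl_mergeOv_append_left {k : ℕ} {s : List ℕ} {L : List (List ℕ)} (z : List ℕ)
    (hs : k ≤ s.length) (hL : ∀ t ∈ L, t.length = k) :
    L.foldl mergeOv (z ++ s) = z ++ L.foldl mergeOv s := by
  induction L generalizing s with
  | nil => rfl
  | cons t L ih =>
    have ht := hL t mem_cons_self
    have hmerge : mergeOv (z ++ s) t = z ++ mergeOv s t := by
      rw [mergeOv, mergeOv, ov_append_left z (by omega), append_assoc]
    rw [foldl_cons, foldl_cons, hmerge]
    exact ih (by rw [mergeOv_eq_take_append, length_append]; omega)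
      fun u hu => hL u (mem_cons_of_mem t hu)

lemma foldl_mergeOv_cons {k : ℕ} {s t : List ℕ} {L : List (List ℕ)}
    (hL : ∀ u ∈ t :: L, u.length = k) :
    (t :: L).foldl mergeOv s = s.take (s.length - ov s t) ++ L.foldl mergeOv t := by
  rw [foldl_cons, mergeOv_eq_take_append]
  exact foldl_mergeOv_append_left _ (hL t mem_cons_self).ge fun u hu => hL u (mem_cons_of_mem t hu)

lemma length_foldl_mergeOv_add_sum_ov {k : ℕ} {P : List ℕ} {L : List (List ℕ)}
    (hL : ∀ Q ∈ P :: L, Q.length = k) :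
    (L.foldl mergeOv P).length + (zipWith ov (P :: L) L).sum = k * (L.length + 1) := by
  induction L generalizing P with
  | nil => simp [hL P mem_cons_self]
  | cons B L ih =>
    have hP := hL P mem_cons_self
    have hov := ov_le_length_left P B
    rw [foldl_mergeOv_cons (fun u hu => hL u (mem_cons_of_mem P hu)), length_append,
      length_take, zipWith_cons_cons, sum_cons, length_cons]
    have := ih fun u hu => hL u (mem_cons_of_mem P hu)
    rw [Nat.mul_succ, ← this]
    omega

end Merge

section Windows

lemma length_eq_of_perm_range' {n : ℕ} {P : List ℕ} (h : P.Perm (range' 1 n)) :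
    P.length = n := by
  simpa using h.length_eq

lemma succ_notMem_of_perm_range' {n : ℕ} {P : List ℕ} (h : P.Perm (range' 1 n)) : n + 1 ∉ P :=
  fun hn => by
    have := h.mem_iff.1 hn
    rw [mem_range'_1] at this
    omega

lemma not_perm_range'_of_notMem {n : ℕ} {w : List ℕ} (hn : 1 ≤ n) (h : n ∉ w) :
    ¬ w.Perm (range' 1 n) :=
  fun hw => h (hw.mem_iff.2 (mem_range'.2 ⟨n - 1, by omega, by omega⟩))

lemma notMem_drop_of_head?_eq {a i : ℕ} {P : List ℕ} (hP : P.Nodup) (h : P.head? = some a)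
    (hi : 1 ≤ i) : a ∉ P.drop i := by
  obtain ⟨t, rfl⟩ : ∃ t, P = a :: t := by
    cases P with
    | nil => simp at h
    | cons b t => exact ⟨t, by simp_all⟩
  obtain ⟨i, rfl⟩ : ∃ j, i = j + 1 := ⟨i - 1, by omega⟩
  exact fun hmem => (nodup_cons.1 hP).1 ((drop_subset i t) hmem)

lemma notMem_take_of_getLast?_eq {a i : ℕ} {P : List ℕ} (hP : P.Nodup)
    (h : P.getLast? = some a) (hi : i < P.length) : a ∉ P.take i := by
  have hrev : a ∉ P.reverse.drop (P.length - i) :=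
    notMem_drop_of_head?_eq (nodup_reverse.2 hP) (by rwa [head?_reverse]) (by omega)
  rwa [drop_reverse, mem_reverse, Nat.sub_sub_self hi.le] at hrev

lemma windows_append_of_prefix {n g : ℕ} {P B M : List ℕ} (hP : P.length = n)
    (hB : B.length = n) (hBM : B <+: M) (hg : g ≤ n) :
    windows n (P.take g ++ M) =
      (range g).map (fun i => (P.take g).drop i ++ B.take (n - g + i)) ++ windows n M := by
  obtain ⟨R, rfl⟩ := hBM
  have hc : (P.take g).length = g := by rw [length_take]; omega
  have hlen : (P.take g ++ (B ++ R)).length + 1 - n = g + ((B ++ R).length + 1 - n) := by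
    simp only [length_append, hc]; omega
  rw [windows, windows, hlen, range_add, map_append, map_map]
  congr 1
  · refine map_congr_left fun i hi => ?_
    rw [mem_range] at hi
    rw [drop_append_of_le_length (by omega), take_append, length_drop, hc,
      take_of_length_le (by rw [length_drop, hc]; omega),
      take_append_of_le_length (by omega)]
    congr 2
    omega
  · refine map_congr_left fun i _ => ?_
    rw [Function.comp_apply, ← drop_length_add_append (l₂ := B ++ R), hc]

/-- A short overlap (shorter than `n - 1`) only joins a permutation starting with `n` to one
ending with `n`: then no window straddling the junction contains `n`. -/
def Linked (n : ℕ) (P Q : List ℕ) : Prop :=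
  ov P Q + 2 ≤ n → P.head? = some n ∧ Q.getLast? = some n

lemma filter_junction_windows {n : ℕ} (hn : 1 ≤ n) {P B : List ℕ} (hP : P.Perm (range' 1 n))
    (hB : B.Perm (range' 1 n)) (hPB : P ≠ B) (hlink : Linked n P B) :
    ((range (n - ov P B)).map fun i =>
        (P.take (n - ov P B)).drop i ++ B.take (n - (n - ov P B) + i)).filter
      (fun w => decide (w.Perm (range' 1 n))) = [P] := by
  have hPn := length_eq_of_perm_range' hP
  have hBn := length_eq_of_perm_range' hB
  have ho : ov P B < n := hBn ▸ ov_lt_of_ne (hPn.trans hBn.symm) hPB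
  obtain ⟨g, hg⟩ : ∃ g, n - ov P B = g + 1 := ⟨n - ov P B - 1, by omega⟩
  have hfirst : (P.take (g + 1)).drop 0 ++ B.take (n - (g + 1) + 0) = P := by
    rw [drop_zero, ← hg, Nat.sub_sub_self ho.le, add_zero, ← drop_length_sub_ov, hPn, hg,
      take_append_drop]
  have hstraddle : ∀ i < g,
      n ∉ (P.take (g + 1)).drop (i + 1) ++ B.take (n - (g + 1) + (i + 1)) := by
    intro i hi
    obtain ⟨hhead, hlast⟩ := hlink (by omega)
    rw [mem_append, drop_take, not_or]
    exact ⟨fun h => notMem_drop_of_head?_eq (hP.nodup_iff.2 nodup_range') hhead (by omega)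
        (take_subset _ _ h),
      notMem_take_of_getLast?_eq (hB.nodup_iff.2 nodup_range') hlast (by omega)⟩
  rw [hg, range_succ_eq_map, map_cons, map_map, filter_cons, hfirst,
    if_pos (decide_eq_true hP), filter_eq_nil_iff.2]
  simp only [mem_map, mem_range, Function.comp_apply, decide_eq_true_eq]
  rintro _ ⟨i, hi, rfl⟩
  exact not_perm_range'_of_notMem hn (hstraddle i hi)

lemma filter_windows_foldl_mergeOv {n : ℕ} (hn : 1 ≤ n) {P : List ℕ} {L : List (List ℕ)}
    (hperm : ∀ Q ∈ P :: L, Q.Perm (range' 1 n)) (hnodup : (P :: L).Nodup)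
    (hlink : IsChain (Linked n) (P :: L)) :
    (windows n (L.foldl mergeOv P)).filter (fun w => decide (w.Perm (range' 1 n))) = P :: L := by
  induction L generalizing P with
  | nil =>
    have hP := length_eq_of_perm_range' (hperm P mem_cons_self)
    have hwin : P.length + 1 - n = 1 := by omega
    simp [windows, hwin, take_of_length_le hP.le, hperm P mem_cons_self]
  | cons B L ih =>
    have hP := hperm P mem_cons_self
    have hB := hperm B (by simp)
    have hPB : P ≠ B := fun h => (nodup_cons.1 hnodup).1 (h ▸ mem_cons_self)
    rw [foldl_mergeOv_cons fun u hu => length_eq_of_perm_range' (hperm u (mem_cons_of_mem P hu)),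
      length_eq_of_perm_range' hP, windows_append_of_prefix (length_eq_of_perm_range' hP)
        (length_eq_of_perm_range' hB) (prefix_foldl_mergeOv L B) (Nat.sub_le n _),
      filter_append, filter_junction_windows hn hP hB hPB hlink.rel,
      ih (fun Q hQ => hperm Q (mem_cons_of_mem P hQ)) hnodup.of_cons hlink.tail, singleton_append]

lemma permsOrder_foldl_mergeOv {n : ℕ} (hn : 1 ≤ n) {P : List ℕ} {L : List (List ℕ)}
    (hperm : ∀ Q ∈ P :: L, Q.Perm (range' 1 n)) (hnodup : (P :: L).Nodup)
    (hlink : IsChain (Linked n) (P :: L)) :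
    permsOrder n (L.foldl mergeOv P) = P :: L := by
  rw [permsOrder, filter_windows_foldl_mergeOv hn hperm hnodup hlink,
    dedup_eq_self.2 (nodup_reverse.2 hnodup), reverse_reverse]

end Windows

section CyclicShifts

variable {m : ℕ} {P P' : List ℕ}

/-- The word `Q = P ⧺ (m+1) ⧺ P` of the construction. -/
def sandwich (m : ℕ) (P : List ℕ) : List ℕ := P ++ (m + 1) :: P

/-- `(P ++ [m + 1]).rotate i`, for `i ≤ P.length`. -/
def cyclicShift (m : ℕ) (P : List ℕ) (i : ℕ) : List ℕ := P.drop i ++ (m + 1) :: P.take i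

/-- The `m + 1` windows of length `m + 1` of `sandwich m P`, in order. -/
def cyclicShifts (m : ℕ) (P : List ℕ) : List (List ℕ) := (range (m + 1)).map (cyclicShift m P)

lemma length_sandwich (hP : P.length = m) : (sandwich m P).length = 2 * m + 1 := by
  simp only [sandwich, length_append, length_cons, hP]
  omega

lemma cyclicShift_zero : cyclicShift m P 0 = P ++ [m + 1] := by simp [cyclicShift]

lemma cyclicShift_of_length_eq (hP : P.length = m) : cyclicShift m P m = (m + 1) :: P := by
  simp [cyclicShift, ← hP]

lemma length_cyclicShift (hP : P.length = m) (i : ℕ) : (cyclicShift m P i).length = m + 1 := by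
  simp only [cyclicShift, length_append, length_drop, length_cons, length_take, hP]
  omega

lemma cyclicShift_perm (i : ℕ) : (cyclicShift m P i).Perm (P ++ [m + 1]) :=
  perm_middle.trans ((perm_append_comm.trans (by rw [take_append_drop])).cons _) |>.trans
    (perm_append_singleton _ _).symm

lemma cyclicShift_injective (hP : P.length = m) (hP' : P'.length = m) (hmP : m + 1 ∉ P)
    {i j : ℕ} (hi : i ≤ m) (hj : j ≤ m) (h : cyclicShift m P i = cyclicShift m P' j) :
    i = j ∧ P = P' := by
  rw [cyclicShift, cyclicShift, append_cons_inj_of_notMem (fun h => hmP (mem_of_mem_drop h))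
    (fun h => hmP (mem_of_mem_take h))] at h
  obtain ⟨hdrop, -, htake⟩ := h
  have hij : i = j := by
    have := congrArg length hdrop
    simp only [length_drop, hP, hP'] at this
    omega
  subst hij
  exact ⟨rfl, by rw [← take_append_drop i P, hdrop, htake, take_append_drop]⟩

lemma ov_cyclicShift_succ (hP : P.length = m) (hmP : m + 1 ∉ P) {i : ℕ} (hi : i < m) :
    ov (cyclicShift m P i) (cyclicShift m P (i + 1)) = m := by
  have hne : cyclicShift m P i ≠ cyclicShift m P (i + 1) := fun h => by
    have := (cyclicShift_injective hP hP hmP (by omega) (by omega) h).1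
    omega
  have hlt := ov_lt_of_ne (by rw [length_cyclicShift hP, length_cyclicShift hP]) hne
  rw [length_cyclicShift hP] at hlt
  have hsuf : (cyclicShift m P (i + 1)).take m = (cyclicShift m P i).drop 1 := by
    have hdrop : (P.drop (i + 1)).length = m - (i + 1) := by rw [length_drop, hP]
    rw [cyclicShift, cyclicShift, take_append, take_of_length_le (by omega), hdrop,
      show m - (m - (i + 1)) = i + 1 by omega, take_succ_cons, take_take, min_eq_left (by omega),
      drop_append_of_le_length (by rw [length_drop]; omega), drop_drop, Nat.add_comm]
  refine le_antisymm (by omega) (le_ov (by rw [length_cyclicShift hP]; omega)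
    (by rw [length_cyclicShift hP]; omega) ?_)
  rw [hsuf]
  exact drop_suffix 1 _

lemma ov_sandwich_cyclicShift_zero (hP : P.length = m) (hP' : P'.length = m) (hmP : m + 1 ∉ P)
    (hne : P ≠ P') : ov (sandwich m P) (cyclicShift m P' 0) = ov P P' := by
  rw [sandwich, ov_append_left P (by rw [length_cyclicShift hP']; simp [hP]), cyclicShift_zero,
    ← singleton_append, ov_append_append (by omega)]
  intro l hl _ hlP' hsuf
  simp only [length_append, length_singleton, hP'] at hlP'
  rw [take_of_length_le (by rw [length_append, length_singleton]; omega)] at hsuf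
  obtain ⟨x, hx⟩ := hsuf
  have hsplit : [] ++ (m + 1) :: P = (x ++ P') ++ [m + 1] := by
    rw [append_assoc, hx]; rfl
  obtain ⟨hxP', -, hPnil⟩ := (append_cons_inj_of_notMem not_mem_nil hmP).1 hsplit
  exact hne (hPnil.trans (append_eq_nil_iff.1 hxP'.symm).2.symm)

lemma ov_sandwich_sandwich (hP : P.length = m) (hP' : P'.length = m) (hmP : m + 1 ∉ P)
    (hne : P ≠ P') : ov (sandwich m P) (sandwich m P') = ov P P' := by
  rw [sandwich, sandwich, show P ++ (m + 1) :: P = (P ++ [m + 1]) ++ P by simp,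
    ov_append_append (by omega)]
  intro l hl _ _ hsuf
  obtain ⟨k, rfl⟩ : ∃ k, l = P'.length + (k + 1) := ⟨l - P'.length - 1, by omega⟩
  rw [take_length_add_append, take_succ_cons] at hsuf
  obtain ⟨x, hx⟩ := hsuf
  have hsplit : P ++ (m + 1) :: P = (x ++ P') ++ (m + 1) :: P'.take k := by
    rw [append_assoc, hx]; simp
  obtain ⟨-, -, htake⟩ := (append_cons_inj_of_notMem hmP hmP).1 hsplit
  exact hne ((htake ▸ take_prefix k P').eq_of_length (by rw [hP, hP']))

/-- Consecutive cyclic shifts overlap in all but one letter, so merging them appends one letter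
at a time. -/
lemma foldl_mergeOv_cyclicShift_range' (hP : P.length = m) (hmP : m + 1 ∉ P) (k : ℕ) :
    ∀ i Z, i + k = m → ((range' (i + 1) k).map (cyclicShift m P)).foldl mergeOv
      (Z ++ cyclicShift m P i) = Z ++ P.drop i ++ (m + 1) :: P := by
  induction k with
  | zero =>
    intro i Z hi
    obtain rfl : i = m := hi
    rw [range'_zero, map_nil, foldl_nil, cyclicShift_of_length_eq hP, ← hP, drop_length,
      append_nil]
  | succ k ih =>
    intro i Z hi
    have hmerge : mergeOv (Z ++ cyclicShift m P i) (cyclicShift m P (i + 1)) =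
        (Z ++ (P.drop i).take 1) ++ cyclicShift m P (i + 1) := by
      rw [mergeOv_eq_take_append, ov_append_left Z (by rw [length_cyclicShift hP,
        length_cyclicShift hP]), ov_cyclicShift_succ hP hmP (by omega), length_append,
        length_cyclicShift hP, show Z.length + (m + 1) - m = Z.length + 1 by omega,
        take_length_add_append, cyclicShift, take_append_of_le_length (by rw [length_drop]; omega)]
    rw [range'_succ, map_cons, foldl_cons, hmerge, ih (i + 1) _ (by omega), append_assoc Z,
      ← drop_drop, take_append_drop]

lemma foldl_mergeOv_tail_cyclicShifts (hP : P.length = m) (hmP : m + 1 ∉ P) (Z : List ℕ) :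
    (cyclicShifts m P).tail.foldl mergeOv (Z ++ cyclicShift m P 0) = Z ++ sandwich m P := by
  rw [cyclicShifts, range_eq_range', range'_succ, map_cons, tail_cons,
    foldl_mergeOv_cyclicShift_range' hP hmP m 0 Z (Nat.zero_add m), drop_zero, append_assoc,
    sandwich]

lemma cyclicShifts_eq_cons : cyclicShifts m P = cyclicShift m P 0 :: (cyclicShifts m P).tail := by
  rw [cyclicShifts, range_succ_eq_map, map_cons, tail_cons]

lemma foldl_mergeOv_flatMap_cyclicShifts_of_sandwich {L : List (List ℕ)}
    (hlen : ∀ Q ∈ P :: L, Q.length = m) (hmem : ∀ Q ∈ P :: L, m + 1 ∉ Q)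
    (hnodup : (P :: L).Nodup) (Z : List ℕ) :
    (L.flatMap (cyclicShifts m)).foldl mergeOv (Z ++ sandwich m P) =
      (L.map (sandwich m)).foldl mergeOv (Z ++ sandwich m P) := by
  induction L generalizing P Z with
  | nil => rfl
  | cons B L ih =>
    have hP := hlen P mem_cons_self
    have hB := hlen B (by simp)
    have hPB : P ≠ B := fun h => (nodup_cons.1 hnodup).1 (h ▸ mem_cons_self)
    have hmP := hmem P mem_cons_self
    set Y := (Z ++ sandwich m P).take ((Z ++ sandwich m P).length - ov P B)
    have hshift : mergeOv (Z ++ sandwich m P) (cyclicShift m B 0) = Y ++ cyclicShift m B 0 := by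
      rw [mergeOv_eq_take_append, ov_append_left Z (by
        rw [length_cyclicShift hB, length_sandwich hP]; omega),
        ov_sandwich_cyclicShift_zero hP hB hmP hPB]
    have hsandwich : mergeOv (Z ++ sandwich m P) (sandwich m B) = Y ++ sandwich m B := by
      rw [mergeOv_eq_take_append, ov_append_left Z (by
        rw [length_sandwich hP, length_sandwich hB]), ov_sandwich_sandwich hP hB hmP hPB]
    rw [flatMap_cons, foldl_append, cyclicShifts_eq_cons, foldl_cons, hshift,
      foldl_mergeOv_tail_cyclicShifts hB (hmem B (by simp)), map_cons, foldl_cons, hsandwich]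
    exact ih (fun Q hQ => hlen Q (mem_cons_of_mem P hQ))
      (fun Q hQ => hmem Q (mem_cons_of_mem P hQ)) hnodup.of_cons Y

lemma foldl_mergeOv_flatMap_cyclicShifts {L : List (List ℕ)} (hlen : ∀ Q ∈ L, Q.length = m)
    (hmem : ∀ Q ∈ L, m + 1 ∉ Q) (hnodup : L.Nodup) :
    (L.flatMap (cyclicShifts m)).foldl mergeOv [] = (L.map (sandwich m)).foldl mergeOv [] := by
  cases L with
  | nil => rfl
  | cons P L =>
    have h := foldl_mergeOv_flatMap_cyclicShifts_of_sandwich hlen hmem hnodup []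
    rw [nil_append] at h
    rw [flatMap_cons, foldl_append, cyclicShifts_eq_cons, foldl_cons, mergeOv_nil_left,
      ← nil_append (cyclicShift m P 0), foldl_mergeOv_tail_cyclicShifts (hlen P mem_cons_self)
      (hmem P mem_cons_self), nil_append, h, map_cons, foldl_cons, mergeOv_nil_left]

lemma zipWith_ov_map_sandwich {L : List (List ℕ)}
    (hlen : ∀ Q ∈ P :: L, Q.length = m) (hmem : ∀ Q ∈ P :: L, m + 1 ∉ Q)
    (hnodup : (P :: L).Nodup) :
    zipWith ov (sandwich m P :: L.map (sandwich m)) (L.map (sandwich m)) =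
      zipWith ov (P :: L) L := by
  induction L generalizing P with
  | nil => rfl
  | cons B L ih =>
    have hPB : P ≠ B := fun h => (nodup_cons.1 hnodup).1 (h ▸ mem_cons_self)
    rw [map_cons, zipWith_cons_cons, ov_sandwich_sandwich (hlen P mem_cons_self)
      (hlen B (by simp)) (hmem P mem_cons_self) hPB,
      ih (fun Q hQ => hlen Q (mem_cons_of_mem P hQ)) (fun Q hQ => hmem Q (mem_cons_of_mem P hQ))
        hnodup.of_cons, zipWith_cons_cons]

end CyclicShifts

/-- The shape of the list of permutations of `[1, …, n]` in order of first appearance in `M_n`. -/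
structure IsSuperpermOrder (n : ℕ) (Ps : List (List ℕ)) : Prop where
  perm : ∀ P ∈ Ps, P.Perm (range' 1 n)
  nodup : Ps.Nodup
  length_eq : Ps.length = n.factorial
  isChain_linked : Ps.IsChain (Linked n)

namespace IsSuperpermOrder

variable {m : ℕ} {Ps : List (List ℕ)}

lemma length_of_mem (h : IsSuperpermOrder m Ps) {P : List ℕ} (hP : P ∈ Ps) : P.length = m :=
  length_eq_of_perm_range' (h.perm P hP)

lemma succ_notMem (h : IsSuperpermOrder m Ps) {P : List ℕ} (hP : P ∈ Ps) : m + 1 ∉ P :=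
  succ_notMem_of_perm_range' (h.perm P hP)

lemma ne_nil (h : IsSuperpermOrder m Ps) : Ps ≠ [] :=
  ne_nil_of_length_pos (h.length_eq ▸ Nat.factorial_pos m)

lemma permsOrder_foldl_mergeOv (hm : 1 ≤ m) (h : IsSuperpermOrder m Ps) :
    permsOrder m (Ps.foldl mergeOv []) = Ps := by
  obtain ⟨P, L, rfl⟩ := exists_cons_of_ne_nil h.ne_nil
  rw [foldl_cons, mergeOv_nil_left]
  exact Superperm.permsOrder_foldl_mergeOv hm h.perm h.nodup h.isChain_linked

lemma length_foldl_map_sandwich (h : IsSuperpermOrder m Ps) :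
    ((Ps.map (sandwich m)).foldl mergeOv []).length =
      (Ps.foldl mergeOv []).length + (m + 1).factorial := by
  obtain ⟨P, L, rfl⟩ := exists_cons_of_ne_nil h.ne_nil
  have hlen : ∀ Q ∈ P :: L, Q.length = m := fun Q hQ => h.length_of_mem hQ
  have hQ : ∀ Q ∈ (P :: L).map (sandwich m), Q.length = 2 * m + 1 := by
    simp only [mem_map]
    rintro _ ⟨Q, hQ, rfl⟩
    exact length_sandwich (hlen Q hQ)
  have hsw := length_foldl_mergeOv_add_sum_ov hQ
  have hPs := length_foldl_mergeOv_add_sum_ov hlen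
  rw [zipWith_ov_map_sandwich hlen (fun Q hQ => h.succ_notMem hQ) h.nodup,
    length_map] at hsw
  rw [map_cons, foldl_cons, foldl_cons, mergeOv_nil_left, mergeOv_nil_left,
    Nat.factorial_succ, ← h.length_eq, length_cons]
  have : (2 * m + 1) * (L.length + 1) = m * (L.length + 1) + (m + 1) * (L.length + 1) := by ring
  omega

theorem flatMap_cyclicShifts (h : IsSuperpermOrder m Ps) :
    IsSuperpermOrder (m + 1) (Ps.flatMap (cyclicShifts m)) where
  perm Q hQ := by
    obtain ⟨P, hP, i, -, rfl⟩ :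
        ∃ P ∈ Ps, ∃ i ∈ range (m + 1), cyclicShift m P i = Q := by
      simpa [cyclicShifts] using hQ
    rw [range'_concat, Nat.one_mul, Nat.add_comm 1 m]
    exact (cyclicShift_perm i).trans ((h.perm P hP).append_right _)
  nodup := by
    refine nodup_flatMap.2 ⟨fun P hP => ?_, h.nodup.imp_of_mem fun hP hP' hne => ?_⟩
    · refine nodup_range.map_on fun i hi j hj hij => ?_
      exact (cyclicShift_injective (h.length_of_mem hP) (h.length_of_mem hP)
        (h.succ_notMem hP) (by simpa [Nat.lt_succ_iff] using hi)
        (by simpa [Nat.lt_succ_iff] using hj) hij).1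
    · simp only [Function.onFun, disjoint_left, cyclicShifts, mem_map, mem_range]
      rintro _ ⟨i, hi, rfl⟩ ⟨j, hj, hij⟩
      exact hne (cyclicShift_injective (h.length_of_mem hP) (h.length_of_mem hP')
        (h.succ_notMem hP) (by omega) (by omega) hij.symm).2
  length_eq := by
    simp [length_flatMap, cyclicShifts, h.length_eq, Nat.factorial_succ, Nat.mul_comm]
  isChain_linked := by
    rw [flatMap_def, isChain_flatten (by simp [cyclicShifts]), isChain_map]
    refine ⟨?_, h.isChain_linked.imp_of_mem_imp fun P P' hP _ _ => ?_⟩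
    · simp only [mem_map]
      rintro _ ⟨P, hP, rfl⟩
      rw [cyclicShifts, isChain_map, isChain_range_succ]
      intro i hi hshort
      rw [ov_cyclicShift_succ (h.length_of_mem hP) (h.succ_notMem hP) hi] at hshort
      omega
    · simp only [cyclicShifts, getLast?_map, getLast?_range, head?_map, head?_range,
        Nat.add_one_ne_zero, if_false, Nat.add_sub_cancel, Option.mem_def, Option.map_some,
        Option.some.injEq]
      rintro _ rfl _ rfl _
      rw [cyclicShift_of_length_eq (h.length_of_mem hP), cyclicShift_zero]
      exact ⟨rfl, getLast?_concat⟩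

end IsSuperpermOrder

lemma Mrec_succ_eq_foldl_map_sandwich {m : ℕ} (hm : 1 ≤ m) {Ps : List (List ℕ)}
    (h : IsSuperpermOrder m Ps) (hM : Mrec m = Ps.foldl mergeOv []) :
    Mrec (m + 1) = (Ps.map (sandwich m)).foldl mergeOv [] := by
  obtain ⟨k, rfl⟩ : ∃ k, m = k + 1 := ⟨m - 1, by omega⟩
  rw [Mrec, hM, h.permsOrder_foldl_mergeOv hm]
  congr
  funext P
  simp [sandwich]

theorem exists_isSuperpermOrder_Mrec {n : ℕ} (hn : 1 ≤ n) :
    ∃ Ps, IsSuperpermOrder n Ps ∧ Mrec n = Ps.foldl mergeOv [] := by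
  induction n, hn using Nat.le_induction with
  | base =>
    exact ⟨[[1]], ⟨by simp, by simp, rfl, by simp⟩, by simp [Mrec, mergeOv_nil_left]⟩
  | succ m hm ih =>
    obtain ⟨Ps, h, hM⟩ := ih
    refine ⟨_, h.flatMap_cyclicShifts, ?_⟩
    rw [Mrec_succ_eq_foldl_map_sandwich hm h hM, foldl_mergeOv_flatMap_cyclicShifts
      (fun Q hQ => h.length_of_mem hQ) (fun Q hQ => h.succ_notMem hQ) h.nodup]

theorem length_Mrec_succ {m : ℕ} (hm : 1 ≤ m) :
    (Mrec (m + 1)).length = (Mrec m).length + (m + 1).factorial := by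
  obtain ⟨Ps, h, hM⟩ := exists_isSuperpermOrder_Mrec hm
  rw [Mrec_succ_eq_foldl_map_sandwich hm h hM, h.length_foldl_map_sandwich, hM]

end Superperm

theorem stmt7 (n : ℕ) (hn : 1 ≤ n) :
    (Mrec n).length = ∑ k ∈ Finset.Icc 1 n, Nat.factorial k := by
  induction n, hn using Nat.le_induction with
  | base => rfl
  | succ m hm ih => rw [Superperm.length_Mrec_succ hm, ih, Finset.sum_Icc_succ_top (by omega)]
end

section
/- For integers 2 ≤ k < n and 0 ≤ j < k!, the set of permutations of {1,...,n} whose circular shift representation has fixed first k-1 digits (determined by j) is invariant under any permutation of the roles of the symbols k+2, k+3, ..., n. -/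
/-!
Split `σ = H * t`, where `H = p_2^{j_2} ⋯ p_k^{j_k}` permutes `{1, …, k}` and
`t = p_{k+1}^{j_{k+1}} ⋯ p_n^{j_n}`. A permutation `π` fixing `1, …, k + 1` commutes with `H`, so
it suffices to show that `π * t` is again such a tail product. The tail products are exactly the
permutations `g` of `{1, …, n}` for which `g⁻¹` lists `1, …, k + 1` in cyclically increasing
order: each `p_m` with `m ≥ k + 1` rotates `{1, …, m}` and so preserves cyclic order, and
conversely one peels off the last factor `p_n^j` sending `g⁻¹ n` to `n` and inducts. Since
`(π * t)⁻¹` agrees with `t⁻¹` on `1, …, k + 1`, the criterion is inherited from `t`.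
-/

open Equiv Set

theorem MonotoneOn.exists_le_iff_le {q : ℕ → ℕ} {K : ℕ} (hq : MonotoneOn q (Icc 1 K)) (b : ℕ) :
    ∃ s ≤ K, ∀ w ∈ Icc 1 K, q w ≤ b ↔ w ≤ s := by
  refine ⟨Nat.findGreatest (fun w => q w ≤ b) K, Nat.findGreatest_le K,
    fun w hw => ⟨fun h => Nat.le_findGreatest hw.2 h, fun h => ?_⟩⟩
  have hs : q (Nat.findGreatest (fun w => q w ≤ b) K) ≤ b :=
    Nat.findGreatest_of_ne_zero (P := fun w => q w ≤ b) rfl (by grind)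
  exact (hq hw ⟨hw.1.trans h, Nat.findGreatest_le K⟩ h).trans hs

theorem StrictMonoOn.add_le_apply_add {f : ℕ → ℕ} {a b : ℕ} (hf : StrictMonoOn f (Icc a b))
    (d : ℕ) {x : ℕ} (hx : a ≤ x) (hxd : x + d ≤ b) : f x + d ≤ f (x + d) := by
  induction d with
  | zero => rfl
  | succ d ih =>
    have := hf (a := x + d) ⟨by omega, by omega⟩ ⟨by omega, hxd⟩ (by omega)
    have := ih (by omega)
    omega

theorem StrictMonoOn.eqOn_id_of_mapsTo {f : ℕ → ℕ} {K : ℕ} (hf : StrictMonoOn f (Icc 1 K))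
    (hfK : MapsTo f (Icc 1 K) (Icc 1 K)) : EqOn f id (Icc 1 K) := by
  intro v ⟨hv1, hvK⟩
  have hlow := hf.add_le_apply_add (v - 1) le_rfl (by omega)
  have hhigh := hf.add_le_apply_add (K - v) hv1 (by omega)
  have h1 := (hfK (show 1 ∈ Icc 1 K by exact ⟨le_rfl, by omega⟩)).1
  have hK := (hfK (show K ∈ Icc 1 K by exact ⟨by omega, le_rfl⟩)).2
  rw [show 1 + (v - 1) = v by omega] at hlow
  rw [show v + (K - v) = K by omega] at hhigh
  simp only [id]
  omega

theorem pcyc_pow_apply_s13 (m j x : ℕ) (hx : x ∈ Icc 1 m) :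
    (pcyc m ^ j) x = (x - 1 + j) % m + 1 := by
  obtain ⟨h1, h2⟩ := hx
  have hlen : (List.range' 1 m).length = m := List.length_range' ..
  have hx : x = (List.range' 1 m)[x - 1]'(by omega) := by
    rw [List.getElem_range'_1]; omega
  conv_lhs => rw [pcyc, hx, List.formPerm_pow_apply_getElem _ (List.nodup_range' ..) j _
    (by omega)]
  simp only [hlen, List.getElem_range'_1]
  omega

theorem pcyc_pow_apply_of_add_mod_le (m j x : ℕ) (h1 : 1 ≤ x) (h2 : x + j % m ≤ m) :
    (pcyc m ^ j) x = x + j % m := by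
  rw [pcyc_pow_apply_s13 m j x ⟨h1, by omega⟩, ← Nat.add_mod_mod, Nat.mod_eq_of_lt (by omega)]
  omega

theorem pcyc_pow_apply_of_lt_add_mod (m j x : ℕ) (hx : x ∈ Icc 1 m) (h : m < x + j % m) :
    (pcyc m ^ j) x = x + j % m - m := by
  obtain ⟨h1, h2⟩ := hx
  have hj : j % m < m := Nat.mod_lt _ (by omega)
  rw [pcyc_pow_apply_s13 m j x ⟨h1, h2⟩, ← Nat.add_mod_mod, Nat.mod_eq_sub_mod (by omega),
    Nat.mod_eq_of_lt (by omega)]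
  omega

theorem pcyc_pow_apply_eq_ite (m j x : ℕ) (hx : x ∈ Icc 1 m) :
    (pcyc m ^ j) x = if x + j % m ≤ m then x + j % m else x + j % m - m := by
  split_ifs with h
  · exact pcyc_pow_apply_of_add_mod_le m j x hx.1 h
  · exact pcyc_pow_apply_of_lt_add_mod m j x hx (by omega)

theorem mapsTo_pcyc_pow (m j : ℕ) : MapsTo (pcyc m ^ j) (Icc 1 m) (Icc 1 m) := by
  intro x hx
  have : (x - 1 + j) % m < m := Nat.mod_lt _ (by grind)
  rw [pcyc_pow_apply_s13 m j x hx]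
  exact ⟨by omega, by omega⟩

theorem pcyc_pow_inv (m j : ℕ) (hm : 0 < m) : (pcyc m ^ j)⁻¹ = pcyc m ^ (j * (m - 1)) := by
  refine inv_eq_of_mul_eq_one_right ?_
  have hpow : pcyc m ^ m = 1 := by
    simpa [pcyc] using
      List.formPerm_pow_length_eq_one_of_nodup _ (List.nodup_range' (s := 1) (n := m))
  rw [← pow_add, show j + j * (m - 1) = m * j by cases m <;> grind, pow_mul, hpow, one_pow]

def FixesOutsideIcc (m : ℕ) (g : Perm ℕ) : Prop :=
  ∀ x, x = 0 ∨ m < x → g x = x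

theorem fixesOutsideIcc_pcyc_pow (m j : ℕ) : FixesOutsideIcc m (pcyc m ^ j) := fun _ hx =>
  Perm.pow_apply_eq_self_of_apply_eq_self
    (List.formPerm_apply_of_notMem (by rw [List.mem_range'_1]; omega)) j

namespace FixesOutsideIcc

variable {m : ℕ} {g h : Perm ℕ}

theorem mono (hg : FixesOutsideIcc m g) {m' : ℕ} (hm : m ≤ m') : FixesOutsideIcc m' g :=
  fun x hx => hg x (by omega)

theorem inv (hg : FixesOutsideIcc m g) : FixesOutsideIcc m g⁻¹ :=
  fun x hx => Perm.inv_eq_iff_eq.2 (hg x hx).symm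

theorem mul (hg : FixesOutsideIcc m g) (hh : FixesOutsideIcc m h) : FixesOutsideIcc m (g * h) :=
  fun x hx => by rw [Perm.mul_apply, hh x hx, hg x hx]

theorem of_succ (hg : FixesOutsideIcc (m + 1) g) (hm : g (m + 1) = m + 1) :
    FixesOutsideIcc m g := by
  intro x hx
  rcases Nat.lt_or_ge (m + 1) x with h | h
  · exact hg x (Or.inr h)
  · obtain rfl | rfl : x = 0 ∨ x = m + 1 := by omega
    exacts [hg 0 (Or.inl rfl), hm]

theorem mapsTo (hg : FixesOutsideIcc m g) : MapsTo g (Icc 1 m) (Icc 1 m) := by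
  intro v ⟨hv1, hvm⟩
  constructor
  · by_contra hc
    have := g.injective (show g v = g 0 by rw [hg 0 (Or.inl rfl)]; omega)
    omega
  · by_contra hc
    have := g.injective (hg (g v) (Or.inr (by omega)))
    omega

theorem exists_mul_pcyc_pow_inv (hg : FixesOutsideIcc (m + 1) g) :
    ∃ j < m + 1, FixesOutsideIcc m (g * (pcyc (m + 1) ^ j)⁻¹) := by
  set u := g⁻¹ (m + 1)
  obtain ⟨hu1, hu2⟩ : u ∈ Icc 1 (m + 1) := hg.inv.mapsTo ⟨by omega, le_rfl⟩
  have hj : (m + 1 - u) % (m + 1) = m + 1 - u := Nat.mod_eq_of_lt (by grind)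
  have hpu : (pcyc (m + 1) ^ (m + 1 - u)) u = m + 1 := by
    rw [pcyc_pow_apply_of_add_mod_le _ _ _ hu1 (by omega), hj]
    grind
  refine ⟨m + 1 - u, by grind, (hg.mul (fixesOutsideIcc_pcyc_pow _ _).inv).of_succ ?_⟩
  rw [Perm.mul_apply, Perm.inv_eq_iff_eq.2 hpu.symm]
  exact g.apply_symm_apply _

end FixesOutsideIcc

def shiftProd (a c : ℕ) (e : ℕ → ℕ) : Perm ℕ :=
  ((List.range' a c).map fun i => pcyc i ^ e i).prod

theorem shiftProd_zero (a : ℕ) (e : ℕ → ℕ) : shiftProd a 0 e = 1 := rfl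

theorem shiftProd_succ (a c : ℕ) (e : ℕ → ℕ) :
    shiftProd a (c + 1) e = shiftProd a c e * pcyc (a + c) ^ e (a + c) := by
  simp [shiftProd, List.range'_concat]

theorem shiftProd_add (a b c : ℕ) (e : ℕ → ℕ) :
    shiftProd a (b + c) e = shiftProd a b e * shiftProd (a + b) c e := by
  rw [shiftProd, shiftProd, shiftProd, ← List.range'_append_1, List.map_append, List.prod_append]

theorem shiftProd_congr {a c : ℕ} {e e' : ℕ → ℕ} (h : ∀ i, a ≤ i → i < a + c → e i = e' i) :
    shiftProd a c e = shiftProd a c e' := by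
  unfold shiftProd
  congr 1
  refine List.map_congr_left fun i hi => ?_
  rw [List.mem_range'_1] at hi
  rw [h i hi.1 hi.2]

theorem fixesOutsideIcc_shiftProd (a c : ℕ) (e : ℕ → ℕ) :
    FixesOutsideIcc (a + c - 1) (shiftProd a c e) := by
  induction c with
  | zero => exact fun x _ => rfl
  | succ c ih =>
    rw [shiftProd_succ]
    exact (ih.mono (by omega)).mul ((fixesOutsideIcc_pcyc_pow _ _).mono (by omega))

theorem circProd_eq_shiftProd_mul_shiftProd {n k : ℕ} (hk : 1 ≤ k) (hkn : k ≤ n) (e : ℕ → ℕ) :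
    circProd n e = shiftProd 2 (k - 1) e * shiftProd (k + 1) (n - k) e := by
  rw [show circProd n e = shiftProd 2 (n - 1) e from rfl, show n - 1 = (k - 1) + (n - k) by omega,
    shiftProd_add, show 2 + (k - 1) = k + 1 by omega]

def CyclicallyMonotone (K : ℕ) (f : ℕ → ℕ) : Prop :=
  ∃ r : ℕ, StrictMonoOn (f ∘ ⇑(pcyc K ^ r)) (Icc 1 K)

namespace CyclicallyMonotone

variable {K : ℕ} {f f' : ℕ → ℕ}

theorem of_comp_pcyc_pow {s : ℕ} (hf : CyclicallyMonotone K (f ∘ ⇑(pcyc K ^ s))) :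
    CyclicallyMonotone K f := by
  obtain ⟨r, hr⟩ := hf
  exact ⟨s + r, by rwa [pow_add, Perm.coe_mul]⟩

theorem congr (hf : CyclicallyMonotone K f) (h : EqOn f f' (Icc 1 K)) :
    CyclicallyMonotone K f' := by
  obtain ⟨r, hr⟩ := hf
  exact ⟨r, hr.congr fun v hv => h (mapsTo_pcyc_pow K r hv)⟩

end CyclicallyMonotone

/-- Rotate the arguments by the number `s` of values that `p_m^j` does not wrap around; then the
images increase again. -/
theorem StrictMonoOn.cyclicallyMonotone_pcyc_pow_comp {K m : ℕ} {q : ℕ → ℕ}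
    (hq : StrictMonoOn q (Icc 1 K)) (hqm : MapsTo q (Icc 1 K) (Icc 1 m)) (j : ℕ) :
    CyclicallyMonotone K (⇑(pcyc m ^ j) ∘ q) := by
  obtain ⟨s, hsK, hs⟩ := hq.monotoneOn.exists_le_iff_le (m - j % m)
  refine ⟨s, fun v hv v' hv' hlt => ?_⟩
  have hrot : ∀ w ∈ Icc 1 K, (pcyc K ^ s) w = if w + s ≤ K then w + s else w + s - K := by
    intro w hw
    rw [pcyc_pow_apply_eq_ite K s w hw]
    rcases hsK.lt_or_eq with h | rfl
    · rw [Nat.mod_eq_of_lt h]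
    · simp only [Nat.mod_self]; grind
  have hval : ∀ w ∈ Icc 1 K,
      (pcyc m ^ j) (q w) = if w ≤ s then q w + j % m else q w + j % m - m := by
    intro w hw
    have := hqm hw
    have := hs w hw
    rw [pcyc_pow_apply_eq_ite m j _ (hqm hw)]
    grind
  have hbd : ∀ w ∈ Icc 1 K, 1 ≤ q w ∧ q w ≤ m := fun w hw => hqm hw
  have hwrap : ∀ w ∈ Icc 1 K, s < w → m - j % m < q w := fun w hw hsw =>
    lt_of_not_ge fun h => by have := (hs w hw).1 h; omega
  obtain ⟨hv1, hvK⟩ := hv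
  obtain ⟨hv'1, hv'K⟩ := hv'
  simp only [Function.comp_apply, hrot v ⟨hv1, hvK⟩, hrot v' ⟨hv'1, hv'K⟩]
  split_ifs with h h'
  · rw [hval _ ⟨by omega, h⟩, hval _ ⟨by omega, h'⟩, if_neg (by omega), if_neg (by omega)]
    have := hq ⟨by omega, h⟩ ⟨by omega, h'⟩ (by omega : v + s < v' + s)
    have := hwrap (v + s) ⟨by omega, h⟩ (by omega)
    omega
  · rw [hval _ ⟨by omega, h⟩, hval _ ⟨by omega, by omega⟩, if_neg (by omega), if_pos (by omega)]
    have := hbd (v + s) ⟨by omega, h⟩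
    have := hbd (v' + s - K) ⟨by omega, by omega⟩
    omega
  · omega
  · rw [hval _ ⟨by omega, by omega⟩, hval _ ⟨by omega, by omega⟩, if_pos (by omega),
      if_pos (by omega)]
    have := hq (a := v + s - K) (b := v' + s - K) ⟨by omega, by omega⟩ ⟨by omega, by omega⟩
      (by omega)
    omega

theorem CyclicallyMonotone.pcyc_pow_comp {K m : ℕ} {f : ℕ → ℕ} (hf : CyclicallyMonotone K f)
    (hfm : MapsTo f (Icc 1 K) (Icc 1 m)) (j : ℕ) :
    CyclicallyMonotone K (⇑(pcyc m ^ j) ∘ f) := by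
  obtain ⟨r, hr⟩ := hf
  exact (hr.cyclicallyMonotone_pcyc_pow_comp (hfm.comp (mapsTo_pcyc_pow K r)) j).of_comp_pcyc_pow

theorem cyclicallyMonotone_shiftProd_inv (k c : ℕ) (e : ℕ → ℕ) :
    CyclicallyMonotone (k + 1) ⇑(shiftProd (k + 1) c e)⁻¹ := by
  induction c with
  | zero => exact ⟨0, by simpa [shiftProd_zero] using strictMonoOn_id⟩
  | succ c ih =>
    rw [shiftProd_succ, mul_inv_rev, pcyc_pow_inv _ _ (by omega), Perm.coe_mul]
    exact ih.pcyc_pow_comp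
      (((fixesOutsideIcc_shiftProd _ _ _).inv.mono (by omega)).mapsTo.mono_left
        (Icc_subset_Icc_right (by omega))) _

theorem eq_one_of_cyclicallyMonotone_inv {k : ℕ} {g : Perm ℕ} (hg : FixesOutsideIcc k g)
    (hcm : CyclicallyMonotone (k + 1) ⇑g⁻¹) : g = 1 := by
  obtain ⟨r, hr⟩ := hcm
  have hid := hr.eqOn_id_of_mapsTo ((hg.inv.mono k.le_succ).mapsTo.comp (mapsTo_pcyc_pow _ r))
  have hpg : ∀ v ∈ Icc 1 (k + 1), (pcyc (k + 1) ^ r) v = g v := fun v hv =>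
    Perm.inv_eq_iff_eq.1 (hid hv)
  have hr0 : r % (k + 1) = 0 := by
    by_contra hne
    have := hpg (k + 1) ⟨by omega, le_rfl⟩
    rw [pcyc_pow_apply_of_lt_add_mod _ _ _ ⟨by omega, le_rfl⟩ (by omega),
      hg (k + 1) (by omega)] at this
    have := Nat.mod_lt r (show 0 < k + 1 by omega)
    omega
  ext x
  rcases (show x = 0 ∨ k < x ∨ x ∈ Icc 1 k by grind) with hx | hx | hx
  · exact hg x (Or.inl hx)
  · exact hg x (Or.inr hx)
  · rw [← hpg x ⟨hx.1, by grind⟩, pcyc_pow_apply_of_add_mod_le _ _ _ hx.1 (by grind), hr0]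
    rfl

theorem exists_eq_shiftProd_of_cyclicallyMonotone_inv (k c : ℕ) (g : Perm ℕ)
    (hg : FixesOutsideIcc (k + c) g) (hcm : CyclicallyMonotone (k + 1) ⇑g⁻¹) :
    ∃ e : ℕ → ℕ, (∀ i, k + 1 ≤ i → i ≤ k + c → e i < i) ∧ g = shiftProd (k + 1) c e := by
  induction c generalizing g with
  | zero => exact ⟨fun _ => 0, by omega, eq_one_of_cyclicallyMonotone_inv hg hcm⟩
  | succ c ih =>
    obtain ⟨j, hj, hg'⟩ := FixesOutsideIcc.exists_mul_pcyc_pow_inv (m := k + c) hg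
    have hcm' : CyclicallyMonotone (k + 1) ⇑(g * (pcyc (k + c + 1) ^ j)⁻¹)⁻¹ := by
      rw [mul_inv_rev, inv_inv, Perm.coe_mul]
      exact hcm.pcyc_pow_comp (hg.inv.mapsTo.mono_left (Icc_subset_Icc_right (by omega))) j
    obtain ⟨e, he, hge⟩ := ih _ hg' hcm'
    refine ⟨Function.update e (k + c + 1) j, fun i hi hic => ?_, ?_⟩
    · rcases eq_or_ne i (k + c + 1) with rfl | hne
      · rwa [Function.update_self]
      · rw [Function.update_of_ne hne]
        exact he i hi (by omega)
    · rw [shiftProd_succ, show k + 1 + c = k + c + 1 by omega, Function.update_self,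
        shiftProd_congr fun i _ hi => Function.update_of_ne (by omega) _ _, ← hge,
        inv_mul_cancel_right]

theorem stmt13 (n k : ℕ) (h2 : 2 ≤ k) (hk : k < n) (d : ℕ → ℕ)
    (π : Equiv.Perm ℕ) (hπ1 : ∀ i ≤ k + 1, π i = i) (hπ2 : ∀ i, n < i → π i = i)
    (σ : Equiv.Perm ℕ)
    (hσ : ∃ e : ℕ → ℕ, (∀ i ∈ Finset.Icc 2 n, e i < i) ∧
      (∀ i ∈ Finset.Icc 2 k, e i = d i) ∧ σ = circProd n e) :
    ∃ e : ℕ → ℕ, (∀ i ∈ Finset.Icc 2 n, e i < i) ∧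
      (∀ i ∈ Finset.Icc 2 k, e i = d i) ∧ π * σ = circProd n e := by
  obtain ⟨e, he, hed, rfl⟩ := hσ
  have hπ : FixesOutsideIcc n π := fun x hx => by grind
  have hcomm : Commute π (shiftProd 2 (k - 1) e) := Perm.Disjoint.commute fun x => by
    rcases le_or_gt x k with hx | hx
    · exact Or.inl (hπ1 x (by omega))
    · exact Or.inr (fixesOutsideIcc_shiftProd 2 (k - 1) e x (by omega))
  have hcm : CyclicallyMonotone (k + 1) ⇑(π * shiftProd (k + 1) (n - k) e)⁻¹ :=
    (cyclicallyMonotone_shiftProd_inv k (n - k) e).congr fun v hv => by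
      rw [mul_inv_rev, Perm.mul_apply, Perm.inv_eq_iff_eq.2 (hπ1 v hv.2).symm]
  obtain ⟨e', he', hte'⟩ := exists_eq_shiftProd_of_cyclicallyMonotone_inv k (n - k) _
    (hπ.mul ((fixesOutsideIcc_shiftProd _ _ _).mono (by omega)) |>.mono (by omega)) hcm
  refine ⟨fun i => if i ≤ k then e i else e' i, fun i hi => by grind, fun i hi => by grind, ?_⟩
  rw [circProd_eq_shiftProd_mul_shiftProd (by omega) hk.le,
    circProd_eq_shiftProd_mul_shiftProd (by omega) hk.le, ← mul_assoc, hcomm.eq, mul_assoc,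
    hte', shiftProd_congr fun i _ hi => if_pos (by omega),
    shiftProd_congr fun i hi _ => if_neg (by omega)]
end

section
/- For n ≥ 5, there exist at least two distinct strings of length ∑_{k=1}^n k! over {1,...,n}, each beginning with 12⋯n, that contain every permutation of {1,...,n} as a contiguous substring. -/
/-!
Visiting the permutations of `1, …, n` one after another, the standard recursive construction
replaces each visit of a permutation `p` by the word `p (n+1) p`. Its windows of length `n + 1`
are the `n + 1` rotations of `p (n+1)`, and every permutation of `1, …, n+1` is such a rotation;
each visit costs `n + 1` extra letters, so the length grows by `(n+1)!`. The new letter `n + 1`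
marks where each block starts, so the construction is injective, and it suffices
to exhibit two different superpermutations of length `∑ k!` for `n = 5`: the standard one, and
the one obtained from it by swapping `4` and `5` in the second half of its walk.
-/

open List Nat

lemma List.append_cons_inj_of_notMem_left {α : Type*} {a : α} {x₁ x₂ z₁ z₂ : List α}
    (h₁ : a ∉ x₁) (h₂ : a ∉ x₂) (h : x₁ ++ a :: z₁ = x₂ ++ a :: z₂) : x₁ = x₂ ∧ z₁ = z₂ := by
  rcases append_eq_append_iff.1 h with ⟨u, rfl, hu⟩ | ⟨u, rfl, hu⟩
  · cases u with
    | nil => simpa using hu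
    | cons b u => exact absurd (by simp_all) h₂
  · cases u with
    | nil => simpa using hu.symm
    | cons b u => exact absurd (by simp_all) h₁

namespace Superperm

/-- A walk through a word is a list of steps: `letters` are the letters written since the
previous visited permutation, and `perm` is the window they complete. -/
structure Step where
  perm : List ℕ
  letters : List ℕ

def word (c : List Step) : List ℕ := c.flatMap Step.letters

@[simp] lemma word_nil : word [] = [] := rfl

@[simp] lemma word_cons (s : Step) (c : List Step) : word (s :: c) = s.letters ++ word c := rfl

lemma mem_word_of_mem_letters {c : List Step} {s : Step} (hs : s ∈ c) {x : ℕ}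
    (hx : x ∈ s.letters) : x ∈ word c :=
  mem_flatMap.2 ⟨s, hs, hx⟩

def IsWalkFrom : List ℕ → List Step → Prop
  | _, [] => True
  | w, s :: c => s.perm <:+ w ++ s.letters ∧ IsWalkFrom s.perm c

instance decidableIsWalkFrom : (w : List ℕ) → (c : List Step) → Decidable (IsWalkFrom w c)
  | _, [] => .isTrue trivial
  | _, s :: c =>
    haveI := decidableIsWalkFrom s.perm c
    inferInstanceAs (Decidable (_ ∧ _))

lemma IsWalkFrom.perm_infix : ∀ {w : List ℕ} {c : List Step}, IsWalkFrom w c →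
    ∀ s ∈ c, s.perm <:+: w ++ word c
  | _, [], _ => by simp
  | w, s :: c, ⟨hs, hc⟩ => by
    have hrest : s.perm ++ word c <:+: w ++ word (s :: c) := by
      obtain ⟨z, hz⟩ := hs
      exact ⟨z, [], by simp only [word_cons, append_nil, ← append_assoc, hz]⟩
    intro t ht
    rcases mem_cons.1 ht with rfl | ht
    · exact (infix_append [] _ _).trans hrest
    · exact (hc.perm_infix t ht).trans hrest

def rotations (w : List ℕ) : ℕ → List Step
  | 0 => []
  | m + 1 => ⟨w.rotate 1, w.take 1⟩ :: rotations (w.rotate 1) m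

@[simp] lemma length_rotations (w : List ℕ) (m : ℕ) : (rotations w m).length = m := by
  induction m generalizing w <;> simp [rotations, *]

lemma word_rotations : ∀ (w : List ℕ) (m : ℕ), m ≤ w.length → word (rotations w m) = w.take m
  | _, 0, _ => rfl
  | a :: v, m + 1, h => by
    have hm : m ≤ v.length := by simpa using h
    have hrec := word_rotations (v ++ [a]) m (by simp; omega)
    simp [rotations, hrec, take_append_of_le_length hm]

lemma isWalkFrom_rotations_append (t : List Step) :
    ∀ (w : List ℕ) (m : ℕ), IsWalkFrom (w.rotate m) t → IsWalkFrom w (rotations w m ++ t)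
  | _, 0, h => by simpa [rotations] using h
  | w, m + 1, h => by
    refine ⟨?_, isWalkFrom_rotations_append t _ m (by rwa [rotate_rotate, add_comm])⟩
    cases w <;> simp

lemma perm_of_mem_rotations {s : Step} {w : List ℕ} {m : ℕ} (hs : s ∈ rotations w m) :
    s.perm ~ w := by
  induction m generalizing w with
  | zero => simp [rotations] at hs
  | succ m ih =>
    rcases mem_cons.1 hs with rfl | hs
    · exact rotate_perm w 1
    · exact (ih hs).trans (rotate_perm w 1)

lemma rotate_mem_rotations : ∀ {w : List ℕ} {m i : ℕ}, 1 ≤ i → i ≤ m →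
    w.rotate i ∈ (rotations w m).map Step.perm
  | _, _, 0, h, _ | _, 0, _ + 1, _, h => by omega
  | _, _ + 1, 1, _, _ => mem_cons_self
  | w, _ + 1, i + 2, _, hi => by
    rw [show w.rotate (i + 2) = (w.rotate 1).rotate (i + 1) by rw [rotate_rotate]; congr 1; omega]
    exact mem_cons_of_mem _ (rotate_mem_rotations (by omega) (by omega))

/-- The walk through `p k p` replacing a visit of `p`. -/
def expand (k : ℕ) (s : Step) : List Step :=
  ⟨s.perm ++ [k], s.letters ++ [k]⟩ :: rotations (s.perm ++ [k]) s.perm.length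

@[simp] lemma length_expand (k : ℕ) (s : Step) : (expand k s).length = s.perm.length + 1 := by
  simp [expand]

lemma word_expand (k : ℕ) (s : Step) : word (expand k s) = s.letters ++ k :: s.perm := by
  simp [expand, word_rotations, take_left']

lemma isWalkFrom_expand_append {k : ℕ} {w : List ℕ} {s : Step} {t : List Step}
    (hs : s.perm <:+ w ++ s.letters) (ht : IsWalkFrom (k :: s.perm) t) :
    IsWalkFrom w (expand k s ++ t) := by
  obtain ⟨z, hz⟩ := hs
  refine ⟨⟨z, by rw [← append_assoc, hz, append_assoc]⟩, isWalkFrom_rotations_append t _ _ ?_⟩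
  rwa [rotate_append_length_eq]

lemma perm_of_mem_expand {k : ℕ} {s t : Step} (ht : t ∈ expand k s) : t.perm ~ s.perm ++ [k] := by
  rcases ht with _ | ⟨_, ht⟩
  · rfl
  · exact perm_of_mem_rotations ht

lemma rotate_mem_expand (k : ℕ) (s : Step) {i : ℕ} (hi : i ≤ s.perm.length) :
    (s.perm ++ [k]).rotate i ∈ (expand k s).map Step.perm := by
  rcases i with _ | i
  · simp [expand]
  · exact mem_cons_of_mem _ (rotate_mem_rotations (by omega) hi)

def extend (k : ℕ) (c : List Step) : List Step := c.flatMap (expand k)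

lemma word_extend (k : ℕ) (c : List Step) :
    word (extend k c) = c.flatMap fun s => s.letters ++ k :: s.perm := by
  simp only [word, extend, flatMap_assoc]
  exact congrArg (flatMap · c) (funext (word_expand k))

lemma IsWalkFrom.extend (k : ℕ) : ∀ {w w' : List ℕ} {c : List Step}, IsWalkFrom w c → w <:+ w' →
    IsWalkFrom w' (extend k c)
  | _, _, [], _, _ => trivial
  | _, _, s :: c, ⟨hs, hc⟩, hw => by
    obtain ⟨z, rfl⟩ := hw
    refine isWalkFrom_expand_append ?_ (hc.extend k (suffix_cons k s.perm))
    obtain ⟨y, hy⟩ := hs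
    exact ⟨z ++ y, by simp [hy]⟩

lemma perm_of_mem_extend {k : ℕ} {c : List Step} {t : Step} (ht : t ∈ extend k c) :
    ∃ s ∈ c, t.perm ~ s.perm ++ [k] :=
  let ⟨s, hs, ht⟩ := mem_flatMap.1 ht
  ⟨s, hs, perm_of_mem_expand ht⟩

lemma length_extend {k n : ℕ} {c : List Step} (hc : ∀ s ∈ c, s.perm.length = n) :
    (extend k c).length = c.length * (n + 1) := by
  induction c with
  | nil => simp [extend]
  | cons s c ih =>
    simp only [extend, flatMap_cons, length_append, length_expand, length_cons] at ih ⊢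
    rw [ih (fun t ht => hc t (mem_cons_of_mem _ ht)), hc s mem_cons_self]
    ring

lemma length_word_extend {k n : ℕ} {c : List Step} (hc : ∀ s ∈ c, s.perm.length = n) :
    (word (extend k c)).length = (word c).length + c.length * (n + 1) := by
  induction c with
  | nil => simp [extend]
  | cons s c ih =>
    simp only [word_extend, flatMap_cons, length_append, length_cons, word_cons] at ih ⊢
    rw [ih (fun t ht => hc t (mem_cons_of_mem _ ht)), hc s mem_cons_self]
    ring

/-- The blocks `letters ++ k :: perm` are read off `word (extend k c)` by splitting at the
first `k`. -/
lemma word_eq_of_word_extend_eq {k n : ℕ} :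
    ∀ {c c' : List Step}, (∀ s ∈ c, s.perm.length = n ∧ k ∉ s.letters) →
      (∀ s ∈ c', s.perm.length = n ∧ k ∉ s.letters) →
      word (extend k c) = word (extend k c') → word c = word c'
  | [], [], _, _, _ => rfl
  | [], _ :: _, _, _, h | _ :: _, [], _, _, h => by simp [word_extend] at h
  | s :: c, s' :: c', hc, hc', h => by
    rw [word_extend, word_extend, flatMap_cons, flatMap_cons, append_assoc, append_assoc,
      cons_append, cons_append] at h
    obtain ⟨hlen, hk⟩ := hc s mem_cons_self
    obtain ⟨hlen', hk'⟩ := hc' s' mem_cons_self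
    obtain ⟨hletters, hrest⟩ := append_cons_inj_of_notMem_left hk hk' h
    obtain ⟨-, hrest⟩ := append_inj hrest (hlen.trans hlen'.symm)
    rw [word_cons, word_cons, hletters, word_eq_of_word_extend_eq
      (fun t ht => hc t (mem_cons_of_mem _ ht)) (fun t ht => hc' t (mem_cons_of_mem _ ht))
      (by rwa [word_extend, word_extend])]

lemma range'_one_succ (n : ℕ) : range' 1 (n + 1) = range' 1 n ++ [n + 1] := by
  simp [range'_concat, add_comm]

structure IsSuperpermWalk (n : ℕ) (c : List Step) : Prop where
  head : ∃ t, c = ⟨range' 1 n, range' 1 n⟩ :: t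
  isWalkFrom : IsWalkFrom [] c
  perm : ∀ s ∈ c, s.perm ~ range' 1 n
  length : c.length = n.factorial
  length_word : (word c).length = ∑ k ∈ Finset.Icc 1 n, k.factorial
  mem_word : ∀ x ∈ word c, x ∈ Finset.Icc 1 n
  cover : ∀ w : List ℕ, w ~ range' 1 n → w ∈ c.map Step.perm

namespace IsSuperpermWalk

variable {n : ℕ} {c : List Step}

lemma prefix_word (h : IsSuperpermWalk n c) : range' 1 n <+: word c := by
  obtain ⟨t, rfl⟩ := h.head
  exact prefix_append _ _

lemma infix_word (h : IsSuperpermWalk n c) {w : List ℕ} (hw : w ~ range' 1 n) : w <:+: word c := by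
  obtain ⟨s, hs, rfl⟩ := mem_map.1 (h.cover w hw)
  simpa using h.isWalkFrom.perm_infix s hs

lemma length_perm (h : IsSuperpermWalk n c) {s : Step} (hs : s ∈ c) : s.perm.length = n := by
  simpa using (h.perm s hs).length_eq

lemma succ_notMem_letters (h : IsSuperpermWalk n c) {s : Step} (hs : s ∈ c) :
    n + 1 ∉ s.letters := fun hk => by
  simpa using h.mem_word _ (mem_word_of_mem_letters hs hk)

lemma cover_extend (h : IsSuperpermWalk n c) {w : List ℕ} (hw : w ~ range' 1 (n + 1)) :
    w ∈ (extend (n + 1) c).map Step.perm := by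
  have hk : n + 1 ∈ w := hw.mem_iff.2 (mem_range'_1.2 ⟨by omega, by omega⟩)
  obtain ⟨a, b, rfl⟩ := append_of_mem hk
  have hba : b ++ a ~ range' 1 n := by
    have := (perm_middle.symm.trans (hw.trans (by rw [range'_one_succ]))).trans
      (perm_append_singleton (n + 1) (range' 1 n))
    exact perm_append_comm.trans this.cons_inv
  obtain ⟨s, hs, hsba⟩ := mem_map.1 (h.cover _ hba)
  have hrot : (s.perm ++ [n + 1]).rotate b.length = a ++ (n + 1) :: b := by
    rw [hsba, append_assoc, rotate_append_length_eq, append_assoc, singleton_append]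
  rw [← hrot, extend, map_flatMap]
  exact mem_flatMap.2 ⟨s, hs, rotate_mem_expand _ s (by simp [hsba])⟩

lemma extend (h : IsSuperpermWalk n c) : IsSuperpermWalk (n + 1) (extend (n + 1) c) where
  head := by
    obtain ⟨t, rfl⟩ := h.head
    simp only [Superperm.extend, flatMap_cons, expand, cons_append, range'_one_succ]
    exact ⟨_, rfl⟩
  isWalkFrom := h.isWalkFrom.extend _ suffix_rfl
  perm s hs := by
    obtain ⟨t, ht, hst⟩ := perm_of_mem_extend hs
    rw [range'_one_succ]
    exact hst.trans ((h.perm t ht).append_right _)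
  length := by
    rw [length_extend fun s hs => h.length_perm hs, h.length, factorial_succ, mul_comm]
  length_word := by
    rw [length_word_extend fun s hs => h.length_perm hs, h.length_word, h.length,
      Finset.sum_Icc_succ_top (by omega), factorial_succ, mul_comm]
  mem_word x hx := by
    rw [word_extend] at hx
    obtain ⟨s, hs, hx⟩ := mem_flatMap.1 hx
    rw [Finset.mem_Icc]
    simp only [mem_append, mem_cons] at hx
    rcases hx with hx | rfl | hx
    · have := Finset.mem_Icc.1 (h.mem_word x (mem_word_of_mem_letters hs hx))
      omega
    · omega
    · have := mem_range'_1.1 ((h.perm s hs).subset hx)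
      omega
  cover _ hw := h.cover_extend hw

end IsSuperpermWalk

def extendFrom (n : ℕ) (c : List Step) : ℕ → List Step
  | 0 => c
  | d + 1 => extend (n + d + 1) (extendFrom n c d)

lemma IsSuperpermWalk.extendFrom {n : ℕ} {c : List Step} (h : IsSuperpermWalk n c) :
    ∀ d, IsSuperpermWalk (n + d) (extendFrom n c d)
  | 0 => h
  | d + 1 => (h.extendFrom d).extend

lemma IsSuperpermWalk.word_extendFrom_ne {n : ℕ} {c c' : List Step} (h : IsSuperpermWalk n c)
    (h' : IsSuperpermWalk n c') (hne : word c ≠ word c') :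
    ∀ d, word (Superperm.extendFrom n c d) ≠ word (Superperm.extendFrom n c' d)
  | 0 => hne
  | d + 1 => fun heq => h.word_extendFrom_ne h' hne d <| word_eq_of_word_extend_eq
      (fun _ hs => ⟨(h.extendFrom d).length_perm hs, (h.extendFrom d).succ_notMem_letters hs⟩)
      (fun _ hs => ⟨(h'.extendFrom d).length_perm hs, (h'.extendFrom d).succ_notMem_letters hs⟩)
      heq

lemma isSuperpermWalk_one : IsSuperpermWalk 1 [⟨[1], [1]⟩] where
  head := ⟨[], rfl⟩
  isWalkFrom := by decide
  perm := by simp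
  length := rfl
  length_word := rfl
  mem_word := by simp
  cover _ hw := by simp_all [perm_singleton]

def standardWalk : List Step := extendFrom 1 [⟨[1], [1]⟩] 4

def Step.map (f : ℕ → ℕ) (s : Step) : Step := ⟨s.perm.map f, s.letters.map f⟩

def twistedWalk : List Step :=
  standardWalk.take 60 ++ (standardWalk.drop 60).map (Step.map (Equiv.swap 4 5))

set_option maxRecDepth 4000 in
lemma isSuperpermWalk_twistedWalk : IsSuperpermWalk 5 twistedWalk where
  head := ⟨_, rfl⟩
  isWalkFrom := by decide
  perm := by decide
  length := by decide
  length_word := by decide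
  mem_word := by decide
  cover w hw := by
    have : ∀ w ∈ (range' 1 5).permutations', w ∈ twistedWalk.map Step.perm := by decide
    exact this w (mem_permutations'.2 hw)

set_option maxRecDepth 4000 in
lemma word_standardWalk_ne_word_twistedWalk : word standardWalk ≠ word twistedWalk := by decide

end Superperm

open Superperm in
theorem stmt15 (n : ℕ) (hn : 5 ≤ n) :
    ∃ s t : List ℕ, s ≠ t ∧
      s.length = ∑ k ∈ Finset.Icc 1 n, Nat.factorial k ∧
      t.length = ∑ k ∈ Finset.Icc 1 n, Nat.factorial k ∧
      List.range' 1 n <+: s ∧ List.range' 1 n <+: t ∧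
      (∀ x ∈ s, x ∈ Finset.Icc 1 n) ∧ (∀ x ∈ t, x ∈ Finset.Icc 1 n) ∧
      (∀ w : List ℕ, w.Perm (List.range' 1 n) → w <:+: s) ∧
      (∀ w : List ℕ, w.Perm (List.range' 1 n) → w <:+: t) := by
  obtain ⟨d, rfl⟩ := Nat.exists_eq_add_of_le hn
  have hA : IsSuperpermWalk 5 standardWalk := isSuperpermWalk_one.extendFrom 4
  have hB := isSuperpermWalk_twistedWalk
  refine ⟨word (extendFrom 5 standardWalk d), word (extendFrom 5 twistedWalk d),
    hA.word_extendFrom_ne hB word_standardWalk_ne_word_twistedWalk d, ?_⟩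
  have hA' := hA.extendFrom d
  have hB' := hB.extendFrom d
  exact ⟨hA'.length_word, hB'.length_word, hA'.prefix_word, hB'.prefix_word, hA'.mem_word,
    hB'.mem_word, fun _ => hA'.infix_word, fun _ => hB'.infix_word⟩
end
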